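/- arXiv:2107.09296 — 4 statements merged into one kernel-verified Lean document; each statement's English description precedes it below -/
import Mathlib

section
/- Let G be a probability measure on a finite parameter set Ω, and for each θ ∈ Ω let f(·|θ) be a probability mass function on a finite observation set Y with f(y|θ) > 0 for all y, θ. Suppose Ĝ maximizes the log-likelihood G ↦ Σ_{i=1}^n log(Σ_θ f(Y_i|θ) G(θ)) over all probability measures on Ω, for observations Y_1,...,Y_n. Then for any bounded function η : Ω → ℝ, the Ĝ-expectation of η equals the average over i of the posterior expectations: Σ_θ η(θ) Ĝ(θ) = (1/n) Σ_{i=1}^n [Σ_θ η(θ) f(Y_i|θ) Ĝ(θ)] / [Σ_θ f(Y_i|θ) Ĝ(θ)]. -/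
/-!
The constraint set is the standard simplex, so optimality of `Ĝ` can be tested along the
segment from `Ĝ` towards each vertex `δ_θ`. Writing `m_i = ∑_θ f(Y_i|θ) Ĝ(θ)`, the one-sided
derivative of the log-likelihood at `Ĝ` in that direction is `r(θ) - n` with
`r(θ) = ∑_i f(Y_i|θ) / m_i`, so `r ≤ n`. On the other hand `∑_θ Ĝ(θ) r(θ) = n`, hence
`Ĝ(θ) r(θ) = n Ĝ(θ)` for every `θ` (complementary slackness). Averaging the posterior
expectations of `η` gives `n⁻¹ ∑_θ η(θ) Ĝ(θ) r(θ)`, which is therefore `∑_θ η(θ) Ĝ(θ)`.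
-/

open Finset Real

theorem sum_div_le_card_of_sum_log_le {ι : Type*} [Fintype ι] {a b : ι → ℝ}
    (ha : ∀ i, 0 < a i)
    (h : ∀ t ∈ Set.Icc (0 : ℝ) 1, ∑ i, log ((1 - t) * a i + t * b i) ≤ ∑ i, log (a i)) :
    ∑ i, b i / a i ≤ Fintype.card ι := by
  set φ : ℝ → ℝ := fun t ↦ ∑ i, log ((1 - t) * a i + t * b i)
  have hderiv : HasDerivAt φ (∑ i, (b i - a i) / a i) 0 := by
    refine HasDerivAt.fun_sum fun i _ ↦ ?_
    have hlin : HasDerivAt (fun t : ℝ ↦ (1 - t) * a i + t * b i) (-1 * a i + 1 * b i) 0 :=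
      ((hasDerivAt_id' 0).const_sub 1 |>.mul_const (a i)).fun_add
        ((hasDerivAt_id' 0).mul_const (b i))
    exact (hlin.log (by simpa using (ha i).ne')).congr_deriv (by simp; ring)
  have hmax : IsLocalMaxOn φ (Set.Icc 0 1) 0 :=
    IsMaxOn.localize fun t ht ↦ by simpa [φ] using h t ht
  have hcone : (1 : ℝ) ∈ posTangentConeAt (Set.Icc (0 : ℝ) 1) 0 :=
    mem_posTangentConeAt_of_segment_subset (by simp [segment_eq_Icc])
  have hslope : ∑ i, (b i - a i) / a i ≤ 0 := by
    simpa using hmax.hasFDerivWithinAt_nonpos hderiv.hasFDerivAt.hasFDerivWithinAt hcone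
  calc ∑ i, b i / a i = ∑ i, ((b i - a i) / a i + 1) := by
        refine sum_congr rfl fun i _ ↦ ?_
        field_simp [(ha i).ne']
        ring
    _ ≤ Fintype.card ι := by simpa [sum_add_distrib] using hslope

theorem mul_eq_mul_of_le_of_sum_mul_eq {ι : Type*} [Fintype ι] {w r : ι → ℝ} {c : ℝ}
    (hw : ∀ i, 0 ≤ w i) (hr : ∀ i, r i ≤ c) (h : ∑ i, w i * r i = c * ∑ i, w i) (i : ι) :
    w i * r i = w i * c := by
  have hzero : ∑ i, w i * (c - r i) = 0 := by
    simp only [mul_sub, sum_sub_distrib, h, ← sum_mul]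
    ring
  have := (sum_eq_zero_iff_of_nonneg fun i _ ↦ mul_nonneg (hw i) (sub_nonneg.2 (hr i))).1
    hzero i (mem_univ i)
  linarith

section Mixture

variable {Ω ι : Type*} [Fintype Ω] [Fintype ι]

theorem sum_mul_pos_of_mem_stdSimplex {w G : Ω → ℝ} (hw : ∀ θ, 0 < w θ)
    (hG : G ∈ stdSimplex ℝ Ω) : 0 < ∑ θ, w θ * G θ := by
  obtain ⟨θ, -, hθ⟩ := exists_lt_of_sum_lt (s := univ) (f := 0) (g := G) (by simp [hG.2])
  exact sum_pos' (fun θ _ ↦ mul_nonneg (hw θ).le (hG.1 θ)) ⟨θ, mem_univ θ, mul_pos (hw θ) hθ⟩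

theorem sum_div_sum_eq_sum_mul_sum_div (L : ι → Ω → ℝ) (G η : Ω → ℝ) :
    ∑ i, (∑ θ, η θ * L i θ * G θ) / ∑ θ, L i θ * G θ =
      ∑ θ, η θ * G θ * ∑ i, L i θ / ∑ θ', L i θ' * G θ' := by
  simp only [sum_div, mul_sum]
  rw [sum_comm]
  refine sum_congr rfl fun θ _ ↦ sum_congr rfl fun i _ ↦ ?_
  ring

/-- `L i θ` stands for `f(Y_i | θ)`, the likelihood of observation `i` under `θ`. -/
noncomputable def logLik (L : ι → Ω → ℝ) (G : Ω → ℝ) : ℝ :=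
  ∑ i, log (∑ θ, L i θ * G θ)

theorem sum_div_le_card_of_isMaxOn_logLik {L : ι → Ω → ℝ} (hL : ∀ i θ, 0 < L i θ)
    {Ĝ : Ω → ℝ} (hĜ : Ĝ ∈ stdSimplex ℝ Ω) (hmax : IsMaxOn (logLik L) (stdSimplex ℝ Ω) Ĝ)
    (θ₀ : Ω) :
    ∑ i, L i θ₀ / ∑ θ, L i θ * Ĝ θ ≤ Fintype.card ι := by
  classical
  refine sum_div_le_card_of_sum_log_le (fun i ↦ sum_mul_pos_of_mem_stdSimplex (hL i) hĜ)
    fun t ⟨ht₀, ht₁⟩ ↦ ?_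
  set G : Ω → ℝ := (1 - t) • Ĝ + t • fun θ ↦ if θ₀ = θ then 1 else 0
  have hG : G ∈ stdSimplex ℝ Ω :=
    convex_stdSimplex ℝ Ω hĜ (ite_eq_mem_stdSimplex ℝ θ₀) (by linarith) ht₀ (by ring)
  have hmix : ∀ i, ∑ θ, L i θ * G θ = (1 - t) * ∑ θ, L i θ * Ĝ θ + t * L i θ₀ := by
    intro i
    simp only [G, Pi.add_apply, Pi.smul_apply, smul_eq_mul, mul_add, sum_add_distrib, mul_sum]
    congr 1
    · exact sum_congr rfl fun θ _ ↦ by ring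
    · simp [mul_comm]
  simpa [logLik, hmix] using hmax hG

end Mixture

theorem stmt_0_general {Ω 𝒴 : Type*} [Fintype Ω]
    (f : 𝒴 → Ω → ℝ) (hf_pos : ∀ y θ, 0 < f y θ)
    (n : ℕ) (hn : 0 < n) (Y : Fin n → 𝒴)
    (Ghat : Ω → ℝ) (hGhat_nonneg : ∀ θ, 0 ≤ Ghat θ) (hGhat_sum : ∑ θ, Ghat θ = 1)
    (hmax : ∀ G : Ω → ℝ, (∀ θ, 0 ≤ G θ) → ∑ θ, G θ = 1 →
      ∑ i, Real.log (∑ θ, f (Y i) θ * G θ) ≤ ∑ i, Real.log (∑ θ, f (Y i) θ * Ghat θ))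
    (η : Ω → ℝ) :
    ∑ θ, η θ * Ghat θ =
      (1 / n : ℝ) * ∑ i, (∑ θ, η θ * f (Y i) θ * Ghat θ) / (∑ θ, f (Y i) θ * Ghat θ) := by
  set L : Fin n → Ω → ℝ := fun i θ ↦ f (Y i) θ
  set r : Ω → ℝ := fun θ ↦ ∑ i, L i θ / ∑ θ', L i θ' * Ghat θ'
  have hGhat : Ghat ∈ stdSimplex ℝ Ω := ⟨hGhat_nonneg, hGhat_sum⟩
  have hr_le : ∀ θ, r θ ≤ n := by
    simpa using sum_div_le_card_of_isMaxOn_logLik (fun i ↦ hf_pos (Y i)) hGhat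
      fun G hG ↦ hmax G hG.1 hG.2
  have hr_mean : ∑ θ, Ghat θ * r θ = n * ∑ θ, Ghat θ := by
    have hm : ∀ i, (∑ θ, L i θ * Ghat θ) ≠ 0 :=
      fun i ↦ (sum_mul_pos_of_mem_stdSimplex (hf_pos (Y i)) hGhat).ne'
    simpa [hm, hGhat_sum] using (sum_div_sum_eq_sum_mul_sum_div L Ghat 1).symm
  have hslack := mul_eq_mul_of_le_of_sum_mul_eq hGhat_nonneg hr_le hr_mean
  have hn' : (n : ℝ) ≠ 0 := by positivity
  calc ∑ θ, η θ * Ghat θ = (1 / n : ℝ) * ∑ θ, η θ * (Ghat θ * r θ) := by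
        simp only [hslack, mul_sum]
        exact sum_congr rfl fun θ _ ↦ by field_simp
    _ = _ := by
        rw [sum_div_sum_eq_sum_mul_sum_div L Ghat η]
        simp only [mul_assoc, L, r]

/-- GMLE expectation equals average of posterior expectations. -/
theorem stmt_0 {Ω 𝒴 : Type*} [Fintype Ω] [Nonempty Ω] [Fintype 𝒴] [Nonempty 𝒴]
    (f : 𝒴 → Ω → ℝ) (hf_pos : ∀ y θ, 0 < f y θ) (hf_pmf : ∀ θ, ∑ y, f y θ = 1)
    (n : ℕ) (hn : 0 < n) (Y : Fin n → 𝒴)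
    (Ghat : Ω → ℝ) (hGhat_nonneg : ∀ θ, 0 ≤ Ghat θ) (hGhat_sum : ∑ θ, Ghat θ = 1)
    (hmax : ∀ G : Ω → ℝ, (∀ θ, 0 ≤ G θ) → ∑ θ, G θ = 1 →
      ∑ i, Real.log (∑ θ, f (Y i) θ * G θ) ≤ ∑ i, Real.log (∑ θ, f (Y i) θ * Ghat θ))
    (η : Ω → ℝ) :
    ∑ θ, η θ * Ghat θ =
      (1 / n : ℝ) * ∑ i, (∑ θ, η θ * f (Y i) θ * Ghat θ) / (∑ θ, f (Y i) θ * Ghat θ) :=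
  stmt_0_general f hf_pos n hn Y Ghat hGhat_nonneg hGhat_sum hmax η
end

section
/- For independent Bernoulli observations: let Y_1,...,Y_n ∈ {0,1}, let Ω ⊆ (0,1) be a finite set of parameters, f(1|p) = p, f(0|p) = 1 − p. If Ĝ is a probability measure on Ω maximizing the likelihood Π_i Σ_p f(Y_i|p)Ĝ(p) over all probability measures on Ω, and Ω contains the value m = (Σ_i Y_i)/n with 0 < m < 1, then Σ_p p·Ĝ(p) = (1/n) Σ_i Y_i. -/
/-!
Averaging the Bernoulli density against a mixing distribution `G` gives again a Bernoulli
density, with parameter the mixing mean `μ`; so the likelihood of any `G` is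
`μ ^ k * (1 - μ) ^ (n - k)`, where `k` counts the ones among the observations. This binomial
likelihood is uniquely maximised over `[0, 1]` at `μ = k / n`, which is attained by the point
mass at the sample mean. Hence a maximiser must have mean `k / n`.
-/

open Finset Real

lemma sum_bernoulli_mul_eq_ite (Ω : Finset ℝ) (G : ℝ → ℝ) (hG : ∑ p ∈ Ω, G p = 1)
    (y : Bool) :
    ∑ p ∈ Ω, (if y then p else 1 - p) * G p =
      if y then ∑ p ∈ Ω, p * G p else 1 - ∑ p ∈ Ω, p * G p := by
  cases y
  · simp only [Bool.false_eq_true, if_false, sub_mul, one_mul, sum_sub_distrib, hG]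
  · simp

lemma prod_ite_bool_eq_pow_mul_pow {ι M : Type*} [Fintype ι] [CommMonoid M] (Y : ι → Bool)
    (a b : M) :
    ∏ i, (if Y i then a else b) = a ^ #{i | Y i} * b ^ #{i | ¬Y i} := by
  rw [prod_ite, prod_const, prod_const]

lemma sum_mul_mem_Icc (Ω : Finset ℝ) (hΩ : ∀ p ∈ Ω, p ∈ Set.Icc (0 : ℝ) 1) (G : ℝ → ℝ)
    (hG_nonneg : ∀ p ∈ Ω, 0 ≤ G p) (hG_sum : ∑ p ∈ Ω, G p = 1) :
    ∑ p ∈ Ω, p * G p ∈ Set.Icc (0 : ℝ) 1 := by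
  refine ⟨sum_nonneg fun p hp => mul_nonneg (hΩ p hp).1 (hG_nonneg p hp), ?_⟩
  rw [← hG_sum]
  exact sum_le_sum fun p hp => mul_le_of_le_one_left (hG_nonneg p hp) (hΩ p hp).2

/-- The tangent line bound `log t < t - 1` applied to `x / m` and `(1 - x) / (1 - m)`; the two
linear terms cancel because `m = k / (k + l)`. -/
lemma mul_log_add_mul_log_one_sub_lt {k l : ℕ} (hk : 0 < k) (hl : 0 < l) {x : ℝ}
    (hx : x ∈ Set.Ioo (0 : ℝ) 1) (hxm : x ≠ k / (k + l)) :
    k * log x + l * log (1 - x) < k * log (k / (k + l)) + l * log (1 - k / (k + l)) := by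
  obtain ⟨hx0, hx1⟩ := hx
  have hkR : (0 : ℝ) < k := by exact_mod_cast hk
  have hlR : (0 : ℝ) < l := by exact_mod_cast hl
  set m : ℝ := k / (k + l) with hm
  have hm_compl : 1 - m = l / (k + l) := by rw [hm]; field_simp; ring
  have hm0 : 0 < m := by positivity
  have hm1 : 0 < 1 - m := by rw [hm_compl]; positivity
  have hlog_x : log (x / m) < x / m - 1 :=
    log_lt_sub_one_of_pos (by positivity) fun h => hxm ((div_eq_one_iff_eq hm0.ne').1 h)
  have hlog_1x : log ((1 - x) / (1 - m)) < (1 - x) / (1 - m) - 1 :=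
    log_lt_sub_one_of_pos (div_pos (by linarith) hm1) fun h =>
      hxm (by linarith [(div_eq_one_iff_eq hm1.ne').1 h])
  have hcancel : k * (x / m - 1) + l * ((1 - x) / (1 - m) - 1) = 0 := by
    rw [hm_compl, hm]; field_simp; ring
  rw [log_div hx0.ne' hm0.ne'] at hlog_x
  rw [log_div (by linarith) hm1.ne'] at hlog_1x
  nlinarith [mul_lt_mul_of_pos_left hlog_x hkR, mul_lt_mul_of_pos_left hlog_1x hlR]

lemma pow_mul_one_sub_pow_lt {k l : ℕ} (hk : 0 < k) (hl : 0 < l) {x : ℝ}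
    (hx : x ∈ Set.Icc (0 : ℝ) 1) (hxm : x ≠ k / (k + l)) :
    x ^ k * (1 - x) ^ l < (k / (k + l) : ℝ) ^ k * (1 - k / (k + l)) ^ l := by
  have hkR : (0 : ℝ) < k := by exact_mod_cast hk
  have hlR : (0 : ℝ) < l := by exact_mod_cast hl
  have hm1 : (0 : ℝ) < 1 - k / (k + l) := by
    rw [sub_pos, div_lt_one (by positivity)]; linarith
  have hmax_pos : (0 : ℝ) < (k / (k + l) : ℝ) ^ k * (1 - k / (k + l)) ^ l := by positivity
  obtain ⟨hx0, hx1⟩ := hx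
  rcases hx0.eq_or_lt with rfl | hx0
  · simpa [zero_pow hk.ne'] using hmax_pos
  rcases hx1.eq_or_lt with rfl | hx1
  · simpa [zero_pow hl.ne'] using hmax_pos
  have hx1' : 0 < 1 - x := sub_pos.2 hx1
  rw [← log_lt_log_iff (by positivity) hmax_pos, log_mul (by positivity) (by positivity),
    log_mul (pow_pos (div_pos hkR (by positivity)) _).ne' (pow_pos hm1 _).ne',
    log_pow, log_pow, log_pow, log_pow]
  exact mul_log_add_mul_log_one_sub_lt hk hl ⟨hx0, hx1⟩ hxm

theorem stmt_2_general (n : ℕ) (Y : Fin n → Bool)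
    (Ω : Finset ℝ) (hΩ : ∀ p ∈ Ω, p ∈ Set.Ioo (0:ℝ) 1)
    (Ghat : ℝ → ℝ) (hG_nonneg : ∀ p ∈ Ω, 0 ≤ Ghat p) (hG_sum : ∑ p ∈ Ω, Ghat p = 1)
    (hmax : ∀ G : ℝ → ℝ, (∀ p ∈ Ω, 0 ≤ G p) → ∑ p ∈ Ω, G p = 1 →
      ∏ i, ∑ p ∈ Ω, (if Y i then p else 1 - p) * G p ≤
        ∏ i, ∑ p ∈ Ω, (if Y i then p else 1 - p) * Ghat p)
    (hm_mem : ((∑ i, if Y i then (1:ℝ) else 0) / n) ∈ Ω)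
    (hm_pos : 0 < (∑ i, if Y i then (1:ℝ) else 0) / n)
    (hm_lt : (∑ i, if Y i then (1:ℝ) else 0) / n < 1) :
    ∑ p ∈ Ω, p * Ghat p = (∑ i, if Y i then (1:ℝ) else 0) / n := by
  set k := #{i | Y i}
  set l := #{i | ¬Y i}
  have hS : (∑ i, if Y i then (1 : ℝ) else 0) = k := by rw [sum_boole]
  have hn : (n : ℝ) = k + l := by
    rw [← Nat.cast_add, card_filter_add_card_filter_not, card_univ, Fintype.card_fin]
  rw [hS, hn] at hm_mem hm_pos hm_lt ⊢
  have hk : 0 < k := by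
    by_contra! h
    simp [Nat.le_zero.1 h] at hm_pos
  have hl : 0 < l := by
    by_contra! h
    simp [Nat.le_zero.1 h, div_self ((Nat.cast_pos (α := ℝ)).2 hk).ne'] at hm_lt
  have hlik (G : ℝ → ℝ) (hG : ∑ p ∈ Ω, G p = 1) :
      ∏ i, ∑ p ∈ Ω, (if Y i then p else 1 - p) * G p =
        (∑ p ∈ Ω, p * G p) ^ k * (1 - ∑ p ∈ Ω, p * G p) ^ l := by
    simp only [sum_bernoulli_mul_eq_ite Ω G hG]
    exact prod_ite_bool_eq_pow_mul_pow Y _ _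
  set δ : ℝ → ℝ := fun p => if p = k / (k + l) then 1 else 0
  have hδ_sum : ∑ p ∈ Ω, δ p = 1 := by simp [δ, hm_mem]
  have hδ_mean : ∑ p ∈ Ω, p * δ p = k / (k + l) := by simp [δ, hm_mem]
  have hpoint := hmax δ (fun _ _ => by positivity) hδ_sum
  rw [hlik δ hδ_sum, hlik Ghat hG_sum, hδ_mean] at hpoint
  have hmean_mem := sum_mul_mem_Icc Ω (fun p hp => Set.Ioo_subset_Icc_self (hΩ p hp)) Ghat
    hG_nonneg hG_sum
  by_contra hne
  exact (pow_mul_one_sub_pow_lt hk hl hmean_mem hne).not_ge hpoint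

/-- for Bernoulli observations, the GMLE mean equals the sample mean,
provided the empirical mean belongs to the (finite) parameter set. -/
theorem stmt_2 (n : ℕ) (hn : 0 < n) (Y : Fin n → Bool)
    (Ω : Finset ℝ) (hΩ : ∀ p ∈ Ω, p ∈ Set.Ioo (0:ℝ) 1)
    (Ghat : ℝ → ℝ) (hG_nonneg : ∀ p ∈ Ω, 0 ≤ Ghat p) (hG_sum : ∑ p ∈ Ω, Ghat p = 1)
    (hmax : ∀ G : ℝ → ℝ, (∀ p ∈ Ω, 0 ≤ G p) → ∑ p ∈ Ω, G p = 1 →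
      ∏ i, ∑ p ∈ Ω, (if Y i then p else 1 - p) * G p ≤
        ∏ i, ∑ p ∈ Ω, (if Y i then p else 1 - p) * Ghat p)
    (hm_mem : ((∑ i, if Y i then (1:ℝ) else 0) / n) ∈ Ω)
    (hm_pos : 0 < (∑ i, if Y i then (1:ℝ) else 0) / n)
    (hm_lt : (∑ i, if Y i then (1:ℝ) else 0) / n < 1) :
    ∑ p ∈ Ω, p * Ghat p = (∑ i, if Y i then (1:ℝ) else 0) / n :=
  stmt_2_general n Y Ω hΩ Ghat hG_nonneg hG_sum hmax hm_mem hm_pos hm_lt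
end

section
/- Identifiability of finite mixtures of two-dimensional Poissons with distinct parameters: let G = Σ_{j=1}^m w_j δ_{(ξ_{1j}, ξ_{2j})} and G' = Σ_{j=1}^{m'} w'_j δ_{(ξ'_{1j}, ξ'_{2j})} be finitely supported probability measures on (0,∞)², each with distinct support points and positive weights, and suppose that for all (a,b) ∈ ℕ², Σ_j w_j e^{−ξ_{1j}−ξ_{2j}} ξ_{1j}^a ξ_{2j}^b /(a! b!) = Σ_j w'_j e^{−ξ'_{1j}−ξ'_{2j}} (ξ'_{1j})^a (ξ'_{2j})^b /(a! b!). Then G = G'. -/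
/-!
Subtracting the two mixtures gives a signed combination `∑ v_j δ_{P_j}` all of whose mixed
moments `∑ v_j x_j^a y_j^b` vanish (the Poisson factors `e^{-x-y}/(a! b!)` depend only on the
atom and on `(a, b)`). Vanishing moments in one variable force the weight of every fibre to
vanish: test against the polynomial `∏ (X - z)` over the other atoms `z`, which kills every
atom except the chosen one. Applying this first to the first coordinate and then to the second
shows that both mixtures put the same total weight on every point, hence they are the same
measure.
-/

open Finset MeasureTheory Polynomial

section Moments

variable {R ι : Type*} [CommRing R]

lemma sum_mul_eval_eq_zero_of_sum_mul_pow_eq_zero {s : Finset ι} {v Q : ι → R}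
    (h : ∀ a : ℕ, ∑ j ∈ s, v j * Q j ^ a = 0) (f : R[X]) :
    ∑ j ∈ s, v j * f.eval (Q j) = 0 := by
  induction f using Polynomial.induction_on' with
  | add f g hf hg => simp only [eval_add, mul_add, sum_add_distrib, hf, hg, add_zero]
  | monomial n a =>
    simp only [eval_monomial, mul_left_comm _ a, ← mul_sum, h n, mul_zero]

variable [IsDomain R] [DecidableEq R]

lemma sum_filter_eq_zero_of_sum_mul_pow_eq_zero {s : Finset ι} {v Q : ι → R}
    (h : ∀ a : ℕ, ∑ j ∈ s, v j * Q j ^ a = 0) (x : R) :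
    ∑ j ∈ s with Q j = x, v j = 0 := by
  set f : R[X] := ∏ z ∈ (s.image Q).erase x, (X - C z)
  have hf_ne : f.eval x ≠ 0 := by
    rw [eval_prod, prod_ne_zero_iff]
    intro z hz
    simpa [sub_eq_zero] using (ne_of_mem_erase hz).symm
  have hf_zero : ∀ j ∈ s, Q j ≠ x → f.eval (Q j) = 0 := fun j hj hjx => by
    rw [eval_prod]
    exact prod_eq_zero (mem_erase.2 ⟨hjx, mem_image_of_mem Q hj⟩) (by simp)
  have hsum : ∑ j ∈ s, v j * f.eval (Q j) = (∑ j ∈ s with Q j = x, v j) * f.eval x := by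
    rw [sum_mul, sum_filter]
    refine sum_congr rfl fun j hj => ?_
    split_ifs with hjx
    · rw [hjx]
    · rw [hf_zero j hj hjx, mul_zero]
  rw [sum_mul_eval_eq_zero_of_sum_mul_pow_eq_zero h f] at hsum
  exact (mul_eq_zero.1 hsum.symm).resolve_right hf_ne

lemma sum_filter_eq_zero_of_sum_mul_pow_mul_pow_eq_zero {s : Finset ι} {v : ι → R}
    {P : ι → R × R} (h : ∀ a b : ℕ, ∑ j ∈ s, v j * (P j).1 ^ a * (P j).2 ^ b = 0)
    (p : R × R) :
    ∑ j ∈ s with P j = p, v j = 0 := by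
  have hfst : ∀ b : ℕ, ∑ j ∈ s with (P j).1 = p.1, v j * (P j).2 ^ b = 0 := fun b =>
    sum_filter_eq_zero_of_sum_mul_pow_eq_zero
      (fun a => by simpa only [mul_right_comm] using h a b) p.1
  have hsnd := sum_filter_eq_zero_of_sum_mul_pow_eq_zero hfst p.2
  simpa only [filter_filter, ← Prod.ext_iff] using hsnd

lemma sum_filter_eq_of_sum_mul_pow_mul_pow_eq {ι' : Type*} [Fintype ι] [Fintype ι']
    {v : ι → R} {P : ι → R × R} {v' : ι' → R} {P' : ι' → R × R}
    (h : ∀ a b : ℕ, ∑ j, v j * (P j).1 ^ a * (P j).2 ^ b =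
      ∑ j, v' j * (P' j).1 ^ a * (P' j).2 ^ b)
    (p : R × R) :
    ∑ j with P j = p, v j = ∑ j with P' j = p, v' j := by
  have hdiff := sum_filter_eq_zero_of_sum_mul_pow_mul_pow_eq_zero (s := univ)
    (v := Sum.elim v (-v')) (P := Sum.elim P P')
    (fun a b => by simp [Fintype.sum_sum_type, h a b]) p
  rw [sum_filter, Fintype.sum_sum_type] at hdiff
  rw [sum_filter, sum_filter, ← add_neg_eq_zero, ← sum_neg_distrib]
  simp only [neg_ite, neg_zero]
  exact hdiff

end Moments

lemma sum_filter_mul_eq_mul {ι α R : Type*} [CommSemiring R] {s : Finset ι} (x : ι → α)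
    (w : ι → R) (g : α → R) (p : α) [DecidablePred (fun j => x j = p)] :
    ∑ j ∈ s with x j = p, w j * g (x j) = (∑ j ∈ s with x j = p, w j) * g p := by
  rw [sum_mul]
  exact sum_congr rfl fun j hj => by rw [(mem_filter.1 hj).2]

lemma sum_ofReal_smul_dirac_eq_sum_fibres {ι α : Type*} [Fintype ι] [MeasurableSpace α]
    [DecidableEq α] {w : ι → ℝ} (hw : ∀ j, 0 ≤ w j) (x : ι → α) {T : Finset α}
    (hT : ∀ j, x j ∈ T) :
    ∑ j, ENNReal.ofReal (w j) • Measure.dirac (x j) =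
      ∑ p ∈ T, ENNReal.ofReal (∑ j with x j = p, w j) • Measure.dirac p := by
  rw [← sum_fiberwise_of_maps_to (fun j _ => hT j)]
  refine sum_congr rfl fun p _ => ?_
  rw [ENNReal.ofReal_sum_of_nonneg (fun j _ => hw j), sum_smul]
  exact sum_congr rfl fun j hj => by rw [(mem_filter.1 hj).2]

theorem stmt_7_general (m m' : ℕ)
    (w : Fin m → ℝ) (ξ : Fin m → ℝ × ℝ)
    (w' : Fin m' → ℝ) (ξ' : Fin m' → ℝ × ℝ)
    (hw : ∀ j, 0 < w j) (hw' : ∀ j, 0 < w' j)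
    (hmix : ∀ a b : ℕ,
      ∑ j, w j * Real.exp (-(ξ j).1 - (ξ j).2) * (ξ j).1 ^ a * (ξ j).2 ^ b /
        (Nat.factorial a * Nat.factorial b) =
      ∑ j, w' j * Real.exp (-(ξ' j).1 - (ξ' j).2) * (ξ' j).1 ^ a * (ξ' j).2 ^ b /
        (Nat.factorial a * Nat.factorial b)) :
    (∑ j, (ENNReal.ofReal (w j)) • Measure.dirac (ξ j)) =
      (∑ j, (ENNReal.ofReal (w' j)) • Measure.dirac (ξ' j)) := by
  classical
  have hmoments : ∀ a b : ℕ,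
      ∑ j, w j * Real.exp (-(ξ j).1 - (ξ j).2) * (ξ j).1 ^ a * (ξ j).2 ^ b =
      ∑ j, w' j * Real.exp (-(ξ' j).1 - (ξ' j).2) * (ξ' j).1 ^ a * (ξ' j).2 ^ b := fun a b => by
    have hfac : (Nat.factorial a * Nat.factorial b : ℝ) ≠ 0 := by positivity
    simpa only [← sum_div, div_left_inj' hfac] using hmix a b
  have hfibre : ∀ p, ∑ j with ξ j = p, w j = ∑ j with ξ' j = p, w' j := fun p => by
    have h := sum_filter_eq_of_sum_mul_pow_mul_pow_eq hmoments p
    rw [sum_filter_mul_eq_mul ξ w (fun q => Real.exp (-q.1 - q.2)),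
      sum_filter_mul_eq_mul ξ' w' (fun q => Real.exp (-q.1 - q.2))] at h
    exact mul_right_cancel₀ (Real.exp_ne_zero _) h
  have hT : ∀ j, ξ j ∈ univ.image ξ ∪ univ.image ξ' := fun j => by simp
  have hT' : ∀ j, ξ' j ∈ univ.image ξ ∪ univ.image ξ' := fun j => by simp
  rw [sum_ofReal_smul_dirac_eq_sum_fibres (fun j => (hw j).le) ξ hT,
    sum_ofReal_smul_dirac_eq_sum_fibres (fun j => (hw' j).le) ξ' hT']
  simp only [hfibre]

/-- identifiability of finite mixtures of two-dimensional Poissons. -/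
theorem stmt_7 (m m' : ℕ)
    (w : Fin m → ℝ) (ξ : Fin m → ℝ × ℝ)
    (w' : Fin m' → ℝ) (ξ' : Fin m' → ℝ × ℝ)
    (hw : ∀ j, 0 < w j) (hw' : ∀ j, 0 < w' j)
    (hwsum : ∑ j, w j = 1) (hw'sum : ∑ j, w' j = 1)
    (hξ : ∀ j, 0 < (ξ j).1 ∧ 0 < (ξ j).2) (hξ' : ∀ j, 0 < (ξ' j).1 ∧ 0 < (ξ' j).2)
    (hinj : Function.Injective ξ) (hinj' : Function.Injective ξ')
    (hmix : ∀ a b : ℕ,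
      ∑ j, w j * Real.exp (-(ξ j).1 - (ξ j).2) * (ξ j).1 ^ a * (ξ j).2 ^ b /
        (Nat.factorial a * Nat.factorial b) =
      ∑ j, w' j * Real.exp (-(ξ' j).1 - (ξ' j).2) * (ξ' j).1 ^ a * (ξ' j).2 ^ b /
        (Nat.factorial a * Nat.factorial b)) :
    (∑ j, (ENNReal.ofReal (w j)) • Measure.dirac (ξ j)) =
      (∑ j, (ENNReal.ofReal (w' j)) • Measure.dirac (ξ' j)) :=
  stmt_7_general m m' w ξ w' ξ' hw hw' hmix
end

section
/- Sampling-without-replacement 4th-moment comparison: let a_1,...,a_n be real numbers, and for k ≤ n let S^{with} = Σ_{i=1}^k a_{I_i} where I_1,...,I_k are iid uniform on {1,...,n}, and S^{without} = Σ_{i=1}^k a_{J_i} where (J_1,...,J_k) is a uniformly random k-tuple of distinct indices. If Σ_i a_i = 0 (centered), then E[(S^{without})^4] ≤ E[(S^{with})^4]. -/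
/-!
Hoeffding's comparison, for any convex `f`. Let a uniform permutation `π` of the population act
on samples. A sample with replacement `I` has the same law as `π ∘ I`; writing `I = u ∘ p` with
`u` injective and `p` a self-map of the positions, `π ∘ u` is a uniform sample without
replacement `J`, so `E f(S_with)` is an average of `E f(∑ i, a (J (p i)))`. For fixed `p`,
averaging `∑ i, a (J (σ (p i)))` over all permutations `σ` of the positions gives `∑ i, a (J i)`,
while `J ∘ σ` has the law of `J`; Jensen's inequality then yields
`E f(∑ i, a (J i)) ≤ E f(∑ i, a (J (p i)))`.
-/

open Finset Equiv
open scoped BigOperators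

namespace MulAction

variable {G X : Type*} [Group G] [Fintype G] [MulAction G X] [Fintype X]
  [IsPretransitive G X]

lemma expect_smul_eq_expect (F : X → ℝ) (x : X) : 𝔼 g : G, F (g • x) = 𝔼 y, F y := by
  have : Nonempty X := ⟨x⟩
  calc 𝔼 g : G, F (g • x) = 𝔼 y : X, 𝔼 g : G, F (g • x) := (Fintype.expect_const _).symm
    _ = 𝔼 y : X, 𝔼 g : G, F (g • y) := by
      refine expect_congr rfl fun y _ => ?_
      obtain ⟨h, rfl⟩ := exists_smul_eq G x y
      exact Fintype.expect_equiv (Equiv.mulRight h⁻¹) _ _ fun g => by simp [mul_smul]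
    _ = 𝔼 g : G, 𝔼 y : X, F (g • y) := expect_comm _ _ _
    _ = 𝔼 y, F y := by
      rw [expect_congr rfl fun g _ =>
        Fintype.expect_equiv (toPerm g) (fun y => F (g • y)) F fun _ => rfl]
      exact Fintype.expect_const _

end MulAction

lemma ConvexOn.map_expect_le {ι : Type*} [Fintype ι] [Nonempty ι] {f : ℝ → ℝ}
    (hf : ConvexOn ℝ Set.univ f) (x : ι → ℝ) : f (𝔼 i, x i) ≤ 𝔼 i, f (x i) := by
  have hcard : (0 : ℝ) < Fintype.card ι := by exact_mod_cast Fintype.card_pos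
  simpa [Fintype.expect_eq_sum_div_card, div_eq_inv_mul, mul_sum, smul_eq_mul] using
    hf.map_sum_le (t := univ) (w := fun _ => (Fintype.card ι : ℝ)⁻¹) (p := x)
      (fun _ _ => by positivity) (by simp [hcard.ne']) (fun _ _ => Set.mem_univ _)

lemma Equiv.Perm.sum_eq_expect_sum_comp {ι : Type*} [Fintype ι] [DecidableEq ι] (x : ι → ℝ)
    (p : ι → ι) : ∑ i, x i = 𝔼 σ : Perm ι, ∑ i, x (σ (p i)) := by
  simp_rw [expect_sum_comm, ← Perm.smul_def, MulAction.expect_smul_eq_expect, sum_const,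
    card_univ, Fintype.card_smul_expect]

lemma Function.exists_embedding_comp_eq {ι α : Type*} [Fintype ι] [Fintype α] [DecidableEq α]
    (I : ι → α) (h : Fintype.card ι ≤ Fintype.card α) :
    ∃ (u : ι ↪ α) (p : ι → ι), ⇑u ∘ p = I := by
  obtain ⟨t, hIt, -, ht⟩ := exists_subsuperset_card_eq (subset_univ (univ.image I))
    (card_image_le.trans_eq card_univ) (h.trans_eq card_univ.symm)
  let e : ι ≃ t := Fintype.equivOfCardEq (by simp [ht])
  refine ⟨e.toEmbedding.trans (Embedding.subtype _),
    fun i => e.symm ⟨I i, hIt (mem_image_of_mem I (mem_univ i))⟩, ?_⟩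
  ext i
  simp

section Sampling

variable {ι α : Type*} [Fintype ι] [DecidableEq ι] [Fintype α] {f : ℝ → ℝ}

lemma ConvexOn.expect_embedding_le_expect_comp (hf : ConvexOn ℝ Set.univ f) (a : α → ℝ)
    (p : ι → ι) :
    𝔼 e : ι ↪ α, f (∑ i, a (e i)) ≤ 𝔼 e : ι ↪ α, f (∑ i, a (e (p i))) :=
  calc 𝔼 e : ι ↪ α, f (∑ i, a (e i))
      = 𝔼 e : ι ↪ α, f (𝔼 σ : Perm ι, ∑ i, a (e (σ (p i)))) :=
        expect_congr rfl fun e _ => by rw [← Perm.sum_eq_expect_sum_comp (fun t => a (e t)) p]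
    _ ≤ 𝔼 e : ι ↪ α, 𝔼 σ : Perm ι, f (∑ i, a (e (σ (p i)))) :=
        expect_le_expect fun e _ => hf.map_expect_le _
    _ = 𝔼 σ : Perm ι, 𝔼 e : ι ↪ α, f (∑ i, a (e (σ (p i)))) := expect_comm _ _ _
    _ = 𝔼 e : ι ↪ α, f (∑ i, a (e (p i))) := by
        refine (expect_congr rfl fun σ _ => ?_).trans (Fintype.expect_const _)
        exact Fintype.expect_equiv (embeddingCongr σ.symm (Equiv.refl α)) _ _ fun e => by simp

lemma ConvexOn.expect_embedding_le_expect_perm_comp [DecidableEq α]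
    (hf : ConvexOn ℝ Set.univ f) (a : α → ℝ) (I : ι → α)
    (h : Fintype.card ι ≤ Fintype.card α) :
    𝔼 e : ι ↪ α, f (∑ i, a (e i)) ≤ 𝔼 π : Perm α, f (∑ i, a (π (I i))) := by
  obtain ⟨u, p, rfl⟩ := Function.exists_embedding_comp_eq I h
  have : MulAction.IsPretransitive (Perm α) (ι ↪ α) := ⟨Perm.exists_smul_eq_embedding⟩
  calc 𝔼 e : ι ↪ α, f (∑ i, a (e i))
      ≤ 𝔼 e : ι ↪ α, f (∑ i, a (e (p i))) := hf.expect_embedding_le_expect_comp a p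
    _ = 𝔼 π : Perm α, f (∑ i, a ((π • u) (p i))) :=
        (MulAction.expect_smul_eq_expect (fun e : ι ↪ α => f (∑ i, a (e (p i)))) u).symm
    _ = 𝔼 π : Perm α, f (∑ i, a (π (u (p i)))) := by
        simp only [Function.Embedding.smul_apply, Perm.smul_def]

theorem ConvexOn.expect_sum_embedding_le_expect_sum [DecidableEq α]
    (hf : ConvexOn ℝ Set.univ f) (a : α → ℝ) (h : Fintype.card ι ≤ Fintype.card α) :
    𝔼 e : ι ↪ α, f (∑ i, a (e i)) ≤ 𝔼 I : ι → α, f (∑ i, a (I i)) := by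
  obtain ⟨e₀⟩ := Function.Embedding.nonempty_of_card_le h
  calc 𝔼 e : ι ↪ α, f (∑ i, a (e i))
      ≤ 𝔼 I : ι → α, 𝔼 π : Perm α, f (∑ i, a (π (I i))) :=
        le_expect ⟨e₀, mem_univ _⟩ fun I _ => hf.expect_embedding_le_expect_perm_comp a I h
    _ = 𝔼 π : Perm α, 𝔼 I : ι → α, f (∑ i, a (π (I i))) := expect_comm _ _ _
    _ = 𝔼 I : ι → α, f (∑ i, a (I i)) := by
        refine (expect_congr rfl fun π _ => ?_).trans (Fintype.expect_const _)
        exact Fintype.expect_equiv (arrowCongr (Equiv.refl ι) π) _ _ fun I => rfl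

lemma expect_filter_injective_eq_expect_embedding [DecidableEq α] (F : (ι → α) → ℝ) :
    𝔼 J ∈ univ.filter (fun J : ι → α => Function.Injective J), F J = 𝔼 e : ι ↪ α, F e :=
  (expect_bij (fun (e : ι ↪ α) _ => ⇑e) (fun e _ => by simp [e.injective])
    (fun _ _ => rfl) (fun _ _ _ _ h => DFunLike.coe_injective h)
    (fun J hJ => ⟨⟨J, (mem_filter.1 hJ).2⟩, mem_univ _, rfl⟩)).symm

end Sampling

theorem stmt_9_general (n k : ℕ) (hk : k ≤ n) (a : Fin n → ℝ) :
    (1 / ((Finset.univ.filter fun J : Fin k → Fin n => Function.Injective J).card : ℝ)) *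
      ∑ J ∈ Finset.univ.filter (fun J : Fin k → Fin n => Function.Injective J),
        (∑ i, a (J i)) ^ 4 ≤
    (1 / (n ^ k : ℝ)) * ∑ I : Fin k → Fin n, (∑ i, a (I i)) ^ 4 := by
  have hconvex : ConvexOn ℝ Set.univ fun x : ℝ => x ^ 4 := Even.convexOn_pow (by decide)
  have key := hconvex.expect_sum_embedding_le_expect_sum a (ι := Fin k) (by simpa using hk)
  rw [← expect_filter_injective_eq_expect_embedding fun J => (∑ i, a (J i)) ^ 4] at key
  simpa [expect_eq_sum_div_card, Fintype.expect_eq_sum_div_card, div_eq_inv_mul] using key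

/-- for centered values, the 4th moment of the sum of a sample
without replacement is at most that of a sample with replacement.
Expectations are written as averages over all index functions / injections. -/
theorem stmt_9 (n k : ℕ) (hn : 0 < n) (hk : k ≤ n) (a : Fin n → ℝ)
    (hcent : ∑ i, a i = 0) :
    (1 / ((Finset.univ.filter fun J : Fin k → Fin n => Function.Injective J).card : ℝ)) *
      ∑ J ∈ Finset.univ.filter (fun J : Fin k → Fin n => Function.Injective J),
        (∑ i, a (J i)) ^ 4 ≤
    (1 / (n ^ k : ℝ)) * ∑ I : Fin k → Fin n, (∑ i, a (I i)) ^ 4 :=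
  stmt_9_general n k hk a
end
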